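/- arXiv:1503.03324 — 4 statements merged into one kernel-verified Lean document; each statement's English description precedes it below -/
import Mathlib

section
/- Two distinct first-order terms have at most one unifier of the form {X/u} where X is a variable and u is a non-variable term. That is, if θ = {X/u} and θ' = {X'/u'} are substitutions with u, u' non-variable terms, θ ≠ θ', and s₁, s₂ are distinct terms with s₁θ = s₂θ, then s₁θ' ≠ s₂θ'. -/
/-- First-order terms over function symbols `F` (each use records the number of
arguments), with variables indexed by `ℕ`. -/
inductive Tm (F : Type) : Type
  | var : ℕ → Tm F
  | app : F → (k : ℕ) → (Fin k → Tm F) → Tm F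

namespace Tm

/-- Apply a substitution to a term. -/
def subst (σ : ℕ → Tm F) : Tm F → Tm F
  | var n => σ n
  | app f k ts => app f k (fun i => (ts i).subst σ)

/-- Variables occurring in a term. -/
def vars : Tm F → Set ℕ
  | var n => {n}
  | app _ _ ts => ⋃ i, (ts i).vars

/-- Function symbols occurring in a term. -/
def symbols : Tm F → Set F
  | var _ => ∅
  | app f _ ts => {f} ∪ ⋃ i, (ts i).symbols

/-- Subterms of a term (including the term itself). -/
def subterms : Tm F → Set (Tm F)
  | var n => {var n}
  | app f k ts => {app f k ts} ∪ ⋃ i, (ts i).subterms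

/-- The head (outermost) function symbol, if any. -/
def head? : Tm F → Option F
  | var _ => none
  | app f _ _ => some f

def IsVar : Tm F → Prop
  | var _ => True
  | app _ _ _ => False

def isGround (t : Tm F) : Prop := t.vars = ∅

/-- Well-formedness w.r.t. an arity assignment: every function symbol is used
with exactly its arity. -/
def WF (ar : F → ℕ) : Tm F → Prop
  | var _ => True
  | app f k ts => k = ar f ∧ ∀ i, (ts i).WF ar

end Tm

/-- A term is an alien w.r.t. a set `S` of function symbols if it is a
non-variable term whose head symbol is not in `S`. -/
def IsAlien (S : Set F) (t : Tm F) : Prop :=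
  ∃ f, t.head? = some f ∧ f ∉ S

/-- The substitution `{X/u}`. -/
def sub1 (X : ℕ) (u : Tm F) : ℕ → Tm F := fun n => if n = X then u else .var n

/-- `σ` is the substitution `{V 0/t 0, …, V (k-1)/t (k-1)}`. -/
def FiniteSub (σ : ℕ → Tm F) (V : Fin k → ℕ) (t : Fin k → Tm F) : Prop :=
  (∀ i, σ (V i) = t i) ∧ ∀ n, (∀ i, V i ≠ n) → σ n = Tm.var n

/-- An atom: a predicate symbol applied to a list of terms. -/
structure Atom (F Pr : Type) where
  pred : Pr
  args : List (Tm F)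

namespace Atom
def subst (σ : ℕ → Tm F) (A : Atom F Pr) : Atom F Pr := ⟨A.pred, A.args.map (Tm.subst σ)⟩
def vars (A : Atom F Pr) : Set ℕ := { n | ∃ t ∈ A.args, n ∈ t.vars }
def symbols (A : Atom F Pr) : Set F := { f | ∃ t ∈ A.args, f ∈ t.symbols }
def isGround (A : Atom F Pr) : Prop := A.vars = ∅
def WFA (ar : F → ℕ) (A : Atom F Pr) : Prop := ∀ t ∈ A.args, t.WF ar
end Atom

/-- A definite clause `head ← body`. -/
structure Clause (F Pr : Type) where
  head : Atom F Pr
  body : List (Atom F Pr)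

/-- A definite program: a set of definite clauses. -/
abbrev Program (F Pr : Type) := Set (Clause F Pr)

/-- A query: a conjunction (list) of atoms. -/
abbrev Query (F Pr : Type) := List (Atom F Pr)

def Clause.subst (σ : ℕ → Tm F) (C : Clause F Pr) : Clause F Pr :=
  ⟨C.head.subst σ, C.body.map (Atom.subst σ)⟩

def Clause.symbols (C : Clause F Pr) : Set F :=
  C.head.symbols ∪ { f | ∃ A ∈ C.body, f ∈ A.symbols }

def Clause.vars (C : Clause F Pr) : Set ℕ :=
  C.head.vars ∪ { n | ∃ A ∈ C.body, n ∈ A.vars }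

def Clause.WFC (ar : F → ℕ) (C : Clause F Pr) : Prop :=
  C.head.WFA ar ∧ ∀ A ∈ C.body, A.WFA ar

def progSymbols (Pg : Program F Pr) : Set F := { f | ∃ C ∈ Pg, f ∈ C.symbols }

def ProgramWF (ar : F → ℕ) (Pg : Program F Pr) : Prop := ∀ C ∈ Pg, C.WFC ar

def querySymbols (Q : Query F Pr) : Set F := { f | ∃ A ∈ Q, f ∈ A.symbols }

def queryVars (Q : Query F Pr) : Set ℕ := { n | ∃ A ∈ Q, n ∈ A.vars }

def QueryWF (ar : F → ℕ) (Q : Query F Pr) : Prop := ∀ A ∈ Q, A.WFA ar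

def substQuery (σ : ℕ → Tm F) (Q : Query F Pr) : Query F Pr := Q.map (Atom.subst σ)

/-- A first-order interpretation (for a language without equality). -/
structure Interp (F Pr : Type) where
  dom : Type
  nonempty : Nonempty dom
  fn : F → (k : ℕ) → (Fin k → dom) → dom
  rel : Pr → List dom → Prop

namespace Interp

def eval (I : Interp F Pr) (ρ : ℕ → I.dom) : Tm F → I.dom
  | .var n => ρ n
  | .app f k ts => I.fn f k (fun i => I.eval ρ (ts i))

def holdsAtom (I : Interp F Pr) (ρ : ℕ → I.dom) (A : Atom F Pr) : Prop :=
  I.rel A.pred (A.args.map (I.eval ρ))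

def holdsClause (I : Interp F Pr) (C : Clause F Pr) : Prop :=
  ∀ ρ, (∀ B ∈ C.body, I.holdsAtom ρ B) → I.holdsAtom ρ C.head

def isModel (I : Interp F Pr) (Pg : Program F Pr) : Prop := ∀ C ∈ Pg, I.holdsClause C

end Interp

/-- `P ⊨ Q`: logical consequence of the universal closure of the query. -/
def Entails (Pg : Program F Pr) (Q : Query F Pr) : Prop :=
  ∀ I : Interp F Pr, I.isModel Pg → ∀ ρ, ∀ A ∈ Q, I.holdsAtom ρ A

/-- A substitution mapping every variable to a ground term. -/
def GroundSub (σ : ℕ → Tm F) : Prop := ∀ n, (σ n).isGround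

/-- A grounding substitution by well-formed ground terms
(terms of the Herbrand universe for arities `ar`). -/
def WFGroundSub (ar : F → ℕ) (σ : ℕ → Tm F) : Prop :=
  ∀ n, (σ n).isGround ∧ (σ n).WF ar

/-- A Herbrand interpretation (set of ground atoms) that is a model of `Pg`. -/
def IsHerbrandModel (Pg : Program F Pr) (S : Set (Atom F Pr)) : Prop :=
  ∀ C ∈ Pg, ∀ σ : ℕ → Tm F, GroundSub σ →
    (∀ B ∈ C.body, B.subst σ ∈ S) → C.head.subst σ ∈ S

/-- The least Herbrand model `M_P`. -/
def leastHerbrand (Pg : Program F Pr) : Set (Atom F Pr) :=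
  ⋂₀ { S | IsHerbrandModel Pg S }

/-- `M_P ⊨ Q`: every ground instance of `Q` is true in the least Herbrand model. -/
def HoldsInM (Pg : Program F Pr) (Q : Query F Pr) : Prop :=
  ∀ σ : ℕ → Tm F, GroundSub σ → ∀ A ∈ Q, A.subst σ ∈ leastHerbrand Pg

/-- A Herbrand model over the Herbrand universe of well-formed ground terms. -/
def IsHerbrandModelWF (ar : F → ℕ) (Pg : Program F Pr) (S : Set (Atom F Pr)) : Prop :=
  ∀ C ∈ Pg, ∀ σ : ℕ → Tm F, WFGroundSub ar σ →
    (∀ B ∈ C.body, B.subst σ ∈ S) → C.head.subst σ ∈ S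

/-- The least Herbrand model `M_P` (over well-formed ground terms). -/
def leastHerbrandWF (ar : F → ℕ) (Pg : Program F Pr) : Set (Atom F Pr) :=
  ⋂₀ { S | IsHerbrandModelWF ar Pg S }

/-- `M_P ⊨ Q`, where ground instances are taken over the Herbrand universe of
well-formed ground terms. -/
def HoldsInMWF (ar : F → ℕ) (Pg : Program F Pr) (Q : Query F Pr) : Prop :=
  ∀ σ : ℕ → Tm F, WFGroundSub ar σ → ∀ A ∈ Q, A.subst σ ∈ leastHerbrandWF ar Pg

/-- The query contains no aliens w.r.t. `S` (no subterm of it is an alien). -/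
def QueryNoAliens (S : Set F) (Q : Query F Pr) : Prop :=
  ∀ A ∈ Q, ∀ t ∈ A.args, ∀ s ∈ t.subterms, ¬ IsAlien S s

/-- `Q'` is `Q` generalized for `S`: `Q'` contains no aliens w.r.t. `S` and `Q` is
obtained from `Q'` by a substitution (with domain among the variables of `Q'`)
mapping distinct variables to pairwise distinct aliens w.r.t. `S`. -/
def IsGenQuery (S : Set F) (Q' Q : Query F Pr) : Prop :=
  QueryNoAliens S Q' ∧
  ∃ (k : ℕ) (V : Fin k → ℕ) (t : Fin k → Tm F) (σ : ℕ → Tm F),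
    Function.Injective V ∧ Function.Injective t ∧ (∀ i, IsAlien S (t i)) ∧
    FiniteSub σ V t ∧ (∀ i, V i ∈ queryVars Q') ∧ Q = substQuery σ Q'

private def tmSize {F : Type} : Tm F → ℕ
  | .var _ => 1
  | .app _ _ ts => 1 + ∑ i, tmSize (ts i)

private lemma subst_eq_of_not_mem {F : Type} (X : ℕ) (u : Tm F) :
    ∀ (s : Tm F), X ∉ s.vars → s.subst (sub1 X u) = s := by
  intro s
  induction s with
  | var n =>
      intro hn
      simp [Tm.vars] at hn
      simp [Tm.subst, sub1, Ne.symm hn]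
  | app f k ts ih =>
      intro hn
      simp [Tm.vars] at hn
      simp only [Tm.subst, Tm.app.injEq, heq_eq_eq, true_and]
      funext i
      exact ih i (hn i)

private lemma size_le_of_mem {F : Type} (X : ℕ) (u : Tm F) :
    ∀ (s : Tm F), X ∈ s.vars → tmSize u ≤ tmSize (s.subst (sub1 X u)) := by
  intro s
  induction s with
  | var n =>
      intro hn
      simp [Tm.vars] at hn
      subst hn
      simp [Tm.subst, sub1]
  | app f k ts ih =>
      intro hn
      simp [Tm.vars] at hn
      obtain ⟨i, hi⟩ := hn
      calc tmSize u ≤ tmSize ((ts i).subst (sub1 X u)) := ih i hi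
        _ ≤ ∑ j, tmSize ((ts j).subst (sub1 X u)) :=
            Finset.single_le_sum (f := fun j => tmSize ((ts j).subst (sub1 X u)))
              (fun j _ => Nat.zero_le _) (Finset.mem_univ i)
        _ ≤ 1 + ∑ j, tmSize ((ts j).subst (sub1 X u)) := Nat.le_add_left _ _
        _ = tmSize ((Tm.app f k ts).subst (sub1 X u)) := by simp [Tm.subst, tmSize]

private lemma key_var_app {F : Type} (X X' : ℕ) (u u' : Tm F)
    (n : ℕ) (f : F) (k : ℕ) (ts : Fin k → Tm F)
    (h : (Tm.var n : Tm F).subst (sub1 X u) = (Tm.app f k ts).subst (sub1 X u))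
    (h' : (Tm.var n : Tm F).subst (sub1 X' u') = (Tm.app f k ts).subst (sub1 X' u')) :
    X = X' ∧ u = u' := by
  have hnX : n = X := by
    by_contra hc
    simp [Tm.subst, sub1, hc] at h
  have hnX' : n = X' := by
    by_contra hc
    simp [Tm.subst, sub1, hc] at h'
  subst hnX; subst hnX'
  refine ⟨rfl, ?_⟩
  simp [Tm.subst, sub1] at h h'
  -- show n ∉ vars of app f k ts
  have hnv : n ∉ (Tm.app f k ts).vars := by
    intro hmem
    simp [Tm.vars] at hmem
    obtain ⟨i, hi⟩ := hmem
    have h1 : tmSize u ≤ tmSize ((ts i).subst (sub1 n u)) := size_le_of_mem n u (ts i) hi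
    have h2 : tmSize u = tmSize ((Tm.app f k ts).subst (sub1 n u)) := congrArg tmSize h
    have h3 : tmSize ((Tm.app f k ts).subst (sub1 n u))
        = 1 + ∑ j, tmSize ((ts j).subst (sub1 n u)) := by simp [Tm.subst, tmSize]
    have h4 : tmSize ((ts i).subst (sub1 n u)) ≤ ∑ j, tmSize ((ts j).subst (sub1 n u)) :=
      Finset.single_le_sum (f := fun j => tmSize ((ts j).subst (sub1 n u)))
        (fun j _ => Nat.zero_le _) (Finset.mem_univ i)
    omega
  have e1 : u = Tm.app f k ts := h.trans (subst_eq_of_not_mem n u _ hnv)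
  have e2 : u' = Tm.app f k ts := h'.trans (subst_eq_of_not_mem n u' _ hnv)
  rw [e1, e2]

private lemma key {F : Type} (X X' : ℕ) (u u' : Tm F)
    (hu : ¬ u.IsVar) :
    ∀ s₁ s₂ : Tm F, s₁ ≠ s₂ → s₁.subst (sub1 X u) = s₂.subst (sub1 X u) →
      s₁.subst (sub1 X' u') = s₂.subst (sub1 X' u') → X = X' ∧ u = u' := by
  intro s₁
  induction s₁ with
  | var n =>
      intro s₂ hne h h'
      cases s₂ with
      | var m =>
          exfalso
          by_cases hnX : n = X
          · by_cases hmX : m = X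
            · exact hne (by rw [hnX, hmX])
            · subst hnX
              simp [Tm.subst, sub1, hmX] at h
              subst h
              exact hu trivial
          · by_cases hmX : m = X
            · subst hmX
              simp [Tm.subst, sub1, hnX] at h
              subst h
              exact hu trivial
            · simp [Tm.subst, sub1, hnX, hmX] at h
              exact hne (by rw [h])
      | app f k ts => exact key_var_app X X' u u' n f k ts h h'
  | app f k ts ih =>
      intro s₂ hne h h'
      cases s₂ with
      | var m =>
          exact key_var_app X X' u u' m f k ts h.symm h'.symm
      | app g l ss =>
          simp only [Tm.subst, Tm.app.injEq] at h h'
          obtain ⟨hf, hk, hts⟩ := h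
          obtain ⟨_, _, hts'⟩ := h'
          subst hf; subst hk
          rw [heq_eq_eq] at hts hts'
          have : ∃ i, ts i ≠ ss i := by
            by_contra hc
            push_neg at hc
            exact hne (by rw [funext hc])
          obtain ⟨i, hi⟩ := this
          exact ih i (ss i) hi (congrFun hts i) (congrFun hts' i)

/-- Two distinct terms have at most one unifier of the form `{X/u}`
with `u` a non-variable term. -/
theorem stmt_0 {F : Type} (X X' : ℕ) (u u' : Tm F)
    (hu : ¬ u.IsVar) (hu' : ¬ u'.IsVar)
    (hne : X ≠ X' ∨ u ≠ u')
    (s₁ s₂ : Tm F) (hs : s₁ ≠ s₂)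
    (h : s₁.subst (sub1 X u) = s₂.subst (sub1 X u)) :
    s₁.subst (sub1 X' u') ≠ s₂.subst (sub1 X' u') := by
  intro h'
  obtain ⟨hX, hU⟩ := key X X' u u' hu s₁ s₂ hs h h'
  rcases hne with hne | hne
  · exact hne hX
  · exact hne hU
end

section
/- Let F be a set of function symbols and let t₁, …, t_m be a sequence of m pairwise distinct terms such that t₁, …, t_n (0 ≤ n ≤ m) are variables and t_{n+1}, …, t_m are aliens with respect to F (non-variable terms whose head symbol is not in F). Assume that if t_{n+1}, …, t_m are all ground, then there exist n ground aliens u₁, …, u_n with respect to F that are pairwise distinct from t_{n+1}, …, t_m. Then there exists a ground substitution σ such that (t₁σ, …, t_mσ) consists of m pairwise distinct ground aliens with respect to F. -/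
namespace Tm

/-- Maximum arity of any application occurring in a term. -/
def maxAr {F : Type} : Tm F → ℕ
  | var _ => 0
  | app _ k ts => max k (Finset.univ.sup fun i => (ts i).maxAr)

/-- All arities in the term are `≤ A`. -/
def ArLe {F : Type} (A : ℕ) : Tm F → Prop
  | var _ => True
  | app _ k ts => k ≤ A ∧ ∀ i, ArLe A (ts i)

lemma ArLe.mono {F : Type} {A B : ℕ} (h : A ≤ B) : ∀ {t : Tm F}, ArLe A t → ArLe B t
  | var _, _ => trivial
  | app _ _ ts, ⟨hk, hts⟩ => ⟨hk.trans h, fun i => ArLe.mono h (hts i)⟩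

lemma arLe_maxAr {F : Type} : ∀ t : Tm F, ArLe t.maxAr t
  | var _ => trivial
  | app f k ts => by
    refine ⟨le_max_left _ _, fun i => ?_⟩
    exact (arLe_maxAr (ts i)).mono
      (le_trans (Finset.le_sup (Finset.mem_univ i)) (le_max_right _ _))

lemma subst_isGround {F : Type} {σ : ℕ → Tm F} (hσ : GroundSub σ) :
    ∀ t : Tm F, (t.subst σ).isGround
  | var n => hσ n
  | app f k ts => by
    have := fun i => subst_isGround hσ (ts i)
    simp only [Tm.subst, Tm.isGround, Tm.vars] at *
    exact Set.iUnion_eq_empty.2 this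

end Tm

/-- Key injectivity lemma: if `σ` maps each variable `v` to an application with
arity `A + v + 1` exceeding every arity in `s` and `s'`, then substitution is
injective on such terms. -/
lemma key_inj {F : Type} (f : F) (g : Tm F) (A : ℕ) (σ : ℕ → Tm F)
    (hσ : ∀ v, σ v = .app f (A + v + 1) (fun _ => g)) :
    ∀ {s s' : Tm F}, Tm.ArLe A s → Tm.ArLe A s' → s.subst σ = s'.subst σ → s = s'
  | .var v, .var w, _, _, h => by
    rw [Tm.subst, Tm.subst, hσ v, hσ w] at h
    obtain ⟨-, hk, -⟩ := Tm.app.inj h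
    have : v = w := by omega
    rw [this]
  | .var v, .app f' k' ts', _, hA', h => by
    rw [Tm.subst, Tm.subst, hσ v] at h
    obtain ⟨-, hk, -⟩ := Tm.app.inj h
    exact absurd hk (by have := hA'.1; omega)
  | .app f' k' ts', .var v, hA', _, h => by
    rw [Tm.subst, Tm.subst, hσ v] at h
    obtain ⟨-, hk, -⟩ := Tm.app.inj h
    exact absurd hk (by have := hA'.1; omega)
  | .app f1 k1 ts1, .app f2 k2 ts2, hA1, hA2, h => by
    rw [Tm.subst, Tm.subst] at h
    obtain ⟨hf, hk, hts⟩ := Tm.app.inj h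
    subst hf; subst hk
    have hts' : (fun i => (ts1 i).subst σ) = fun i => (ts2 i).subst σ := eq_of_heq hts
    have : ts1 = ts2 := funext fun i =>
      key_inj f g A σ hσ (hA1.2 i) (hA2.2 i) (congrFun hts' i)
    rw [this]

/-- a sequence of pairwise distinct terms whose first `n` members are
variables and whose remaining members are aliens w.r.t. `S` has a ground instance
consisting of pairwise distinct ground aliens w.r.t. `S` (assuming, in case the alien
members are all ground, the existence of `n` further ground aliens distinct from them,
and a nonempty Herbrand universe). -/
theorem stmt_2 {F : Type} (S : Set F) (m n : ℕ) (hnm : n ≤ m)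
    (t : Fin m → Tm F) (hinj : Function.Injective t)
    (hvar : ∀ i : Fin m, (i : ℕ) < n → (t i).IsVar)
    (halien : ∀ i : Fin m, n ≤ (i : ℕ) → IsAlien S (t i))
    (hHU : ∃ g : Tm F, g.isGround)
    (hextra : (∀ i : Fin m, n ≤ (i : ℕ) → (t i).isGround) →
      ∃ u : Fin n → Tm F, Function.Injective u ∧
        (∀ j, (u j).isGround ∧ IsAlien S (u j)) ∧
        ∀ j (i : Fin m), n ≤ (i : ℕ) → u j ≠ t i) :
    ∃ σ : ℕ → Tm F, GroundSub σ ∧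
      Function.Injective (fun i => (t i).subst σ) ∧
      ∀ i, ((t i).subst σ).isGround ∧ IsAlien S ((t i).subst σ) := by
  obtain ⟨g, hg⟩ := hHU
  rcases eq_or_lt_of_le hnm with hn | hn
  · -- n = m : all terms are variables; use hextra
    subst hn
    obtain ⟨u, huinj, hu, -⟩ := hextra (fun i hi => absurd i.isLt (by omega))
    have hv : ∀ i : Fin n, ∃ w, t i = .var w := by
      intro i
      have h := hvar i i.isLt
      cases ht : t i with
      | var w => exact ⟨w, rfl⟩
      | app f k ts => rw [ht] at h; exact h.elim
    choose v hvv using hv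
    have hvinj : Function.Injective v := fun i j hij => by
      apply hinj; rw [hvv i, hvv j, hij]
    set σ : ℕ → Tm F := fun x => if h : ∃ i, v i = x then u h.choose else g with hσ
    have hσv : ∀ i, σ (v i) = u i := by
      intro i
      have h : ∃ j, v j = v i := ⟨i, rfl⟩
      have : h.choose = i := hvinj h.choose_spec
      simp only [hσ, dif_pos h, this]
    have hts : ∀ i, (t i).subst σ = u i := by
      intro i; rw [hvv i, Tm.subst, hσv]
    refine ⟨σ, ?_, ?_, ?_⟩
    · intro x
      by_cases h : ∃ i, v i = x
      · simp only [hσ, dif_pos h]; exact (hu _).1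
      · simp only [hσ, dif_neg h]; exact hg
    · intro i j hij
      simp only [hts] at hij
      exact huinj hij
    · intro i; rw [hts]; exact ⟨(hu i).1, (hu i).2⟩
  · -- n < m : there is an alien; use its head symbol to build fresh ground aliens
    obtain ⟨f, -, hfS⟩ := halien ⟨n, hn⟩ (le_refl n)
    set A : ℕ := Finset.univ.sup (fun i => (t i).maxAr) with hA
    set σ : ℕ → Tm F := fun v => .app f (A + v + 1) (fun _ => g) with hσ
    have hgs : GroundSub σ := by
      intro x
      simp only [hσ, Tm.isGround, Tm.vars]
      exact Set.iUnion_eq_empty.2 fun _ => hg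
    have hAi : ∀ i, Tm.ArLe A (t i) := fun i =>
      (Tm.arLe_maxAr (t i)).mono (Finset.le_sup (Finset.mem_univ i))
    refine ⟨σ, hgs, ?_, ?_⟩
    · intro i j hij
      exact hinj (key_inj f g A σ (fun _ => rfl) (hAi i) (hAi j) hij)
    · intro i
      refine ⟨Tm.subst_isGround hgs (t i), ?_⟩
      rcases lt_or_ge (i : ℕ) n with hi | hi
      · have h := hvar i hi
        cases ht : t i with
        | var w => exact ⟨f, rfl, hfS⟩
        | app f' k ts => rw [ht] at h; exact h.elim
      · obtain ⟨f', hf', hf'S⟩ := halien i hi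
        cases ht : t i with
        | var w => rw [ht] at hf'; exact absurd hf' (by simp [Tm.head?])
        | app f'' k ts =>
          rw [ht] at hf'
          simp only [Tm.head?, Option.some.injEq] at hf'
          exact ⟨f', by simp [Tm.subst, Tm.head?, hf'], hf'S⟩
end

section
/- Let P be a definite logic program and Q a query (conjunction of atoms). Let ρ = {V₁/t₁, …, V_k/t_k} be a substitution where t₁, …, t_k are pairwise distinct aliens with respect to P ∪ {Q} (non-variable terms whose head function symbol does not occur in P or Q). Then P ⊨ Q if and only if P ⊨ Qρ, where ⊨ denotes logical consequence of the universal closure in first-order logic (without equality). -/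
section AuxAliens

variable {F Pr : Type}

lemma Tm.subst_var (u : Tm F) : u.subst Tm.var = u := by
  induction u with
  | var n => rfl
  | app f m ts ih => simp [Tm.subst, ih]

lemma Interp.eval_subst (I : Interp F Pr) (ν : ℕ → I.dom) (σ : ℕ → Tm F) (u : Tm F) :
    I.eval ν (u.subst σ) = I.eval (fun n => I.eval ν (σ n)) u := by
  induction u with
  | var n => rfl
  | app f m ts ih => simp [Tm.subst, Interp.eval, ih]

open Classical in
/-- Expanded interpretation: domain `I.dom × Tm F`; the second component tracks
the syntactic term; alien terms among `t` get mapped (in the first component)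
to the prescribed values `ρ₀ (V i)`. -/
noncomputable def auxInterp (I : Interp F Pr) (ρ₀ : ℕ → I.dom) {k : ℕ}
    (V : Fin k → ℕ) (t : Fin k → Tm F) : Interp F Pr where
  dom := I.dom × Tm F
  nonempty := ⟨I.nonempty.some, .var 0⟩
  fn f m ds :=
    (if h : ∃ i, t i = Tm.app f m (fun j => (ds j).2)
       then ρ₀ (V h.choose) else I.fn f m (fun j => (ds j).1),
     Tm.app f m (fun j => (ds j).2))
  rel p l := I.rel p (l.map Prod.fst)

variable {I : Interp F Pr} {ρ₀ : ℕ → I.dom} {k : ℕ} {V : Fin k → ℕ} {t : Fin k → Tm F}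

lemma auxInterp_snd (ν : ℕ → I.dom × Tm F) (u : Tm F) :
    ((auxInterp I ρ₀ V t).eval ν u).2 = u.subst (fun n => (ν n).2) := by
  induction u with
  | var n => rfl
  | app f m ts ih =>
    show Tm.app f m (fun j => ((auxInterp I ρ₀ V t).eval ν (ts j)).2)
        = Tm.app f m (fun j => (ts j).subst (fun n => (ν n).2))
    exact congrArg _ (funext fun j => ih j)

lemma auxInterp_fst {S : Set F} (halien : ∀ i, IsAlien S (t i))
    (ν : ℕ → I.dom × Tm F) (u : Tm F) (hu : u.symbols ⊆ S) :
    ((auxInterp I ρ₀ V t).eval ν u).1 = I.eval (fun n => (ν n).1) u := by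
  induction u with
  | var n => rfl
  | app f m ts ih =>
    have hf : f ∈ S := hu (by simp [Tm.symbols])
    have hcond : ¬ ∃ i, t i =
        Tm.app f m (fun j => ((auxInterp I ρ₀ V t).eval ν (ts j)).2) := by
      rintro ⟨i, hi⟩
      obtain ⟨g, hg1, hg2⟩ := halien i
      rw [hi] at hg1
      simp only [Tm.head?, Option.some.injEq] at hg1
      exact hg2 (hg1 ▸ hf)
    have hsub : ∀ j, (ts j).symbols ⊆ S := by
      intro j g hg
      exact hu (by simp only [Tm.symbols]; exact Or.inr (Set.mem_iUnion.mpr ⟨j, hg⟩))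
    classical
    show (if h : ∃ i, t i = Tm.app f m (fun j => ((auxInterp I ρ₀ V t).eval ν (ts j)).2)
          then ρ₀ (V h.choose)
          else I.fn f m (fun j => ((auxInterp I ρ₀ V t).eval ν (ts j)).1))
        = I.fn f m (fun j => I.eval (fun n => (ν n).1) (ts j))
    rw [dif_neg hcond]
    exact congrArg _ (funext fun j => ih j (hsub j))

lemma auxInterp_eval_alien {S : Set F} (ht : Function.Injective t)
    (halien : ∀ i, IsAlien S (t i)) (i : Fin k) :
    ((auxInterp I ρ₀ V t).eval (fun n => (ρ₀ n, Tm.var n)) (t i)).1 = ρ₀ (V i) := by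
  obtain ⟨f, hf, -⟩ := halien i
  set ν : ℕ → I.dom × Tm F := fun n => (ρ₀ n, Tm.var n) with hν
  cases hti : t i with
  | var n => rw [hti] at hf; simp [Tm.head?] at hf
  | app f' m s =>
    have hsnd : (fun j => ((auxInterp I ρ₀ V t).eval ν (s j)).2) = s := by
      funext j
      rw [auxInterp_snd]
      exact Tm.subst_var _
    have hex : ∃ i', t i' =
        Tm.app f' m (fun j => ((auxInterp I ρ₀ V t).eval ν (s j)).2) :=
      ⟨i, by rw [hsnd, hti]⟩
    have hchoose : hex.choose = i := ht (hex.choose_spec.trans (by rw [hsnd, ← hti]))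
    classical
    show (if h : ∃ i', t i' = Tm.app f' m (fun j => ((auxInterp I ρ₀ V t).eval ν (s j)).2)
          then ρ₀ (V h.choose)
          else I.fn f' m (fun j => ((auxInterp I ρ₀ V t).eval ν (s j)).1))
        = ρ₀ (V i)
    rw [dif_pos hex, hchoose]

end AuxAliens

/-- Lemma on aliens: if `ρ = {V₁/t₁,…,V_k/t_k}` where the `tᵢ` are
pairwise distinct aliens w.r.t. `P ∪ {Q}`, then `P ⊨ Q` iff `P ⊨ Qρ`. -/
theorem stmt_4 {F Pr : Type} (Pg : Program F Pr) (Q : Query F Pr)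
    (k : ℕ) (V : Fin k → ℕ) (t : Fin k → Tm F) (ρ : ℕ → Tm F)
    (hV : Function.Injective V) (ht : Function.Injective t)
    (halien : ∀ i, IsAlien (progSymbols Pg ∪ querySymbols Q) (t i))
    (hρ : FiniteSub ρ V t) :
    Entails Pg Q ↔ Entails Pg (substQuery ρ Q) := by
  constructor
  · intro h I hI ν A' hA'
    obtain ⟨A, hA, rfl⟩ := List.mem_map.mp hA'
    have hh := h I hI (fun n => I.eval ν (ρ n)) A hA
    have hl : A.args.map (I.eval ν ∘ Tm.subst ρ)
        = A.args.map (I.eval fun n => I.eval ν (ρ n)) :=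
      List.map_congr_left fun u _ => Interp.eval_subst I ν ρ u
    show I.rel A.pred ((A.args.map (Tm.subst ρ)).map (I.eval ν))
    rw [List.map_map, hl]
    exact hh
  · intro h I hI ρ₀ A hA
    set S : Set F := progSymbols Pg ∪ querySymbols Q with hS
    set J := auxInterp I ρ₀ V t with hJ
    set ν : ℕ → I.dom × Tm F := fun n => (ρ₀ n, Tm.var n) with hν
    -- J is a model of Pg
    have hatom : ∀ (B : Atom F Pr), (∀ u ∈ B.args, u.symbols ⊆ S) →
        ∀ ν' : ℕ → I.dom × Tm F,
        (J.holdsAtom ν' B ↔ I.holdsAtom (fun n => (ν' n).1) B) := by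
      intro B hB ν'
      have : List.map Prod.fst (B.args.map (J.eval ν'))
          = B.args.map (I.eval (fun n => (ν' n).1)) := by
        refine List.map_map.trans ?_
        exact List.map_congr_left fun u hu =>
          auxInterp_fst halien ν' u (hB u hu)
      show I.rel B.pred (List.map Prod.fst (B.args.map (J.eval ν')))
          ↔ I.rel B.pred (B.args.map (I.eval fun n => (ν' n).1))
      rw [this]
    have hJmodel : J.isModel Pg := by
      intro C hC ν' hbody
      have hsym : ∀ B, (B = C.head ∨ B ∈ C.body) → ∀ u ∈ B.args, u.symbols ⊆ S := by
        rintro B hB u hu g hg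
        have : g ∈ C.symbols := by
          rcases hB with rfl | hB
          · exact Or.inl ⟨u, hu, hg⟩
          · exact Or.inr ⟨B, hB, ⟨u, hu, hg⟩⟩
        exact Or.inl ⟨C, hC, this⟩
      have := hI C hC (fun n => (ν' n).1) (fun B hB =>
        (hatom B (hsym B (Or.inr hB)) ν').mp (hbody B hB))
      exact (hatom C.head (hsym C.head (Or.inl rfl)) ν').mpr this
    have key := h J hJmodel ν (A.subst ρ) (List.mem_map_of_mem (f := Atom.subst ρ) hA)
    -- compute the first components
    have hval : ∀ n, (J.eval ν (ρ n)).1 = ρ₀ n := by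
      intro n
      by_cases hn : ∃ i, V i = n
      · obtain ⟨i, rfl⟩ := hn
        rw [hρ.1 i]
        exact auxInterp_eval_alien (S := S) ht halien i
      · rw [hρ.2 n (fun i hi => hn ⟨i, hi⟩)]
        rfl
    have hAsym : ∀ u ∈ A.args, u.symbols ⊆ S := by
      intro u hu g hg
      exact Or.inr ⟨A, hA, ⟨u, hu, hg⟩⟩
    have hlist : List.map Prod.fst ((A.subst ρ).args.map (J.eval ν))
        = A.args.map (I.eval ρ₀) := by
      simp only [Atom.subst, List.map_map]
      refine List.map_map.trans (List.map_map.trans ?_)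
      refine List.map_congr_left fun u hu => ?_
      have h1 : (J.eval ν (u.subst ρ)) = J.eval (fun n => J.eval ν (ρ n)) u :=
        Interp.eval_subst J ν ρ u
      have h2 := auxInterp_fst (ρ₀ := ρ₀) (V := V) halien (fun n => J.eval ν (ρ n)) u (hAsym u hu)
      show (J.eval ν (u.subst ρ)).1 = I.eval ρ₀ u
      rw [h1, h2]
      congr 1
      funext n
      exact hval n
    have key' : I.rel (A.subst ρ).pred
        (List.map Prod.fst ((A.subst ρ).args.map (J.eval ν))) := key
    rw [hlist] at key'
    exact key'
end

section
/- Let P be a definite program, Q an atom, and Q' the generalization of Q for P (obtained by replacing maximal aliens with respect to P by fresh distinct variables). If either (a) the underlying language has a non-constant function symbol not occurring in P, or (b) Q contains exactly n distinct variables and the language has at least n constants occurring in neither P nor Q, then M_P ⊨ Q if and only if P ⊨ Q'. -/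
section TermLemmas
variable {F Pr : Type}

theorem Tm.subst_subst (σ τ : ℕ → Tm F) (t : Tm F) :
    (t.subst σ).subst τ = t.subst (fun n => (σ n).subst τ) := by
  induction t with
  | var n => rfl
  | app f k ts ih => simp only [Tm.subst]; exact congrArg _ (funext ih)

theorem Tm.isGround_iff (t : Tm F) : t.isGround ↔ ∀ n, n ∉ t.vars := by
  simp [Tm.isGround, Set.eq_empty_iff_forall_notMem]

theorem Tm.ground_subst {σ : ℕ → Tm F} (h : ∀ n, (σ n).isGround) (t : Tm F) :
    (t.subst σ).isGround := by
  induction t with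
  | var n => exact h n
  | app f k ts ih =>
    simp only [Tm.isGround, Tm.subst, Tm.vars, Set.iUnion_eq_empty]
    exact fun i => ih i

theorem Tm.WF_subst {ar : F → ℕ} {σ : ℕ → Tm F} (hσ : ∀ n, (σ n).WF ar) {t : Tm F}
    (ht : t.WF ar) : (t.subst σ).WF ar := by
  induction t with
  | var n => exact hσ n
  | app f k ts ih =>
    obtain ⟨h1, h2⟩ := ht
    exact ⟨h1, fun i => ih i (h2 i)⟩

theorem Tm.WF_of_subst {ar : F → ℕ} {σ : ℕ → Tm F} {t : Tm F}
    (ht : (t.subst σ).WF ar) : t.WF ar := by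
  induction t with
  | var n => trivial
  | app f k ts ih =>
    obtain ⟨h1, h2⟩ := ht
    exact ⟨h1, fun i => ih i (h2 i)⟩

theorem Tm.self_mem_subterms (t : Tm F) : t ∈ t.subterms := by
  cases t with
  | var n => exact rfl
  | app f k ts => exact Or.inl rfl

theorem Tm.subterms_trans {s t : Tm F} (h : s ∈ t.subterms) :
    s.subterms ⊆ t.subterms := by
  induction t with
  | var n =>
    rcases h with rfl
    exact subset_rfl
  | app f k ts ih =>
    rcases h with h | h
    · subst h; exact subset_rfl
    · obtain ⟨S, ⟨i, rfl⟩, hs⟩ := h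
      exact (ih i hs).trans (fun x hx => Or.inr ⟨_, ⟨i, rfl⟩, hx⟩)

theorem Tm.arg_mem_subterms {f : F} {k : ℕ} (ts : Fin k → Tm F) (i : Fin k) :
    ts i ∈ (Tm.app f k ts).subterms :=
  Or.inr ⟨_, ⟨i, rfl⟩, Tm.self_mem_subterms _⟩

theorem Tm.var_mem_subterms {x : ℕ} {t : Tm F} :
    x ∈ t.vars ↔ Tm.var x ∈ t.subterms := by
  induction t with
  | var n =>
    constructor
    · rintro rfl; exact rfl
    · rintro h; cases h; rfl
  | app f k ts ih =>
    constructor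
    · rintro ⟨S, ⟨i, rfl⟩, hx⟩
      exact Or.inr ⟨_, ⟨i, rfl⟩, (ih i).1 hx⟩
    · rintro (h | ⟨S, ⟨i, rfl⟩, hx⟩)
      · cases h
      · exact ⟨_, ⟨i, rfl⟩, (ih i).2 hx⟩

theorem Tm.subst_mem_subterms {x : ℕ} {t : Tm F} (σ : ℕ → Tm F) (h : x ∈ t.vars) :
    σ x ∈ (t.subst σ).subterms := by
  induction t with
  | var n => rcases h with rfl; exact Tm.self_mem_subterms _
  | app f k ts ih =>
    obtain ⟨S, ⟨i, rfl⟩, hx⟩ := h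
    exact Or.inr ⟨_, ⟨i, rfl⟩, ih i hx⟩

theorem Tm.vars_subst_mem {x : ℕ} {t : Tm F} (σ : ℕ → Tm F) (h : x ∈ t.vars) :
    (σ x).vars ⊆ (t.subst σ).vars := by
  induction t with
  | var n => rcases h with rfl; exact subset_rfl
  | app f k ts ih =>
    obtain ⟨S, ⟨i, rfl⟩, hx⟩ := h
    exact (ih i hx).trans (fun y hy => Set.mem_iUnion.2 ⟨i, hy⟩)

theorem Tm.symbols_subterm {s t : Tm F} (h : s ∈ t.subterms) :
    s.symbols ⊆ t.symbols := by
  induction t with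
  | var n => rcases h with rfl; exact subset_rfl
  | app f k ts ih =>
    rcases h with h | ⟨S, ⟨i, rfl⟩, hs⟩
    · subst h; exact subset_rfl
    · exact (ih i hs).trans (fun y hy => Or.inr (Set.mem_iUnion.2 ⟨i, hy⟩))

theorem Tm.WF_subterm {ar : F → ℕ} {s t : Tm F} (ht : t.WF ar) (h : s ∈ t.subterms) :
    s.WF ar := by
  induction t with
  | var n => rcases h with rfl; trivial
  | app f k ts ih =>
    rcases h with h | ⟨S, ⟨i, rfl⟩, hs⟩
    · subst h; exact ht
    · exact ih i (ht.2 i) hs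

theorem Tm.noAlien_of_symbols {S : Set F} {t : Tm F} (h : ∀ f ∈ t.symbols, f ∈ S) :
    ∀ s ∈ t.subterms, ¬ IsAlien S s := by
  rintro s hs ⟨f, hf, hfS⟩
  cases s with
  | var n => cases hf
  | app f' k ts =>
    cases hf
    exact hfS (h _ (Tm.symbols_subterm hs (Or.inl rfl)))

theorem Interp.eval_congr (I : Interp F Pr) {ρ ρ' : ℕ → I.dom} {t : Tm F}
    (h : ∀ x ∈ t.vars, ρ x = ρ' x) : I.eval ρ t = I.eval ρ' t := by
  induction t with
  | var n => exact h n rfl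
  | app f k ts ih =>
    simp only [Interp.eval]
    exact congrArg _ (funext fun i => ih i (fun x hx => h x (Set.mem_iUnion.2 ⟨i, hx⟩)))

theorem Atom.subst_subst (σ τ : ℕ → Tm F) (B : Atom F Pr) :
    (B.subst σ).subst τ = B.subst (fun n => (σ n).subst τ) := by
  simp [Atom.subst, List.map_map, Function.comp_def, Tm.subst_subst]

end TermLemmas
section Depth
variable {F : Type}

/-- Depth of a term. -/
def Tm.depth : Tm F → ℕ
  | .var _ => 0
  | .app _ _ ts => (Finset.univ.sup fun i => (ts i).depth) + 1

theorem Tm.depth_arg_lt {f : F} {k : ℕ} (ts : Fin k → Tm F) (i : Fin k) :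
    (ts i).depth < (Tm.app f k ts).depth :=
  Nat.lt_succ_of_le (Finset.le_sup (f := fun i => (ts i).depth) (Finset.mem_univ i))

theorem Tm.depth_subterm_le {s t : Tm F} (h : s ∈ t.subterms) : s.depth ≤ t.depth := by
  induction t with
  | var n => rcases h with rfl; exact le_rfl
  | app f k ts ih =>
    rcases h with h | ⟨S, ⟨i, rfl⟩, hs⟩
    · subst h; exact le_rfl
    · exact (ih i hs).trans (Tm.depth_arg_lt ts i).le

theorem Tm.depth_subst_le {θ : ℕ → Tm F} {B : ℕ} {t : Tm F}
    (h : ∀ y ∈ t.vars, (θ y).depth ≤ B) : (t.subst θ).depth ≤ t.depth + B := by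
  induction t with
  | var n => simpa [Tm.subst, Tm.depth] using h n rfl
  | app f k ts ih =>
    simp only [Tm.subst, Tm.depth]
    have : (Finset.univ.sup fun i => ((ts i).subst θ).depth) ≤
        (Finset.univ.sup fun i => (ts i).depth) + B := by
      apply Finset.sup_le
      intro i _
      exact (ih i (fun y hy => h y (Set.mem_iUnion.2 ⟨i, hy⟩))).trans
        (Nat.add_le_add_right (Finset.le_sup (f := fun i => (ts i).depth) (Finset.mem_univ i)) B)
    omega

theorem Tm.depth_subst_ge {θ : ℕ → Tm F} {y : ℕ} {t : Tm F} (h : y ∈ t.vars) :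
    (θ y).depth ≤ (t.subst θ).depth := by
  induction t with
  | var n => rcases h with rfl; exact le_rfl
  | app f k ts ih =>
    obtain ⟨S, ⟨i, rfl⟩, hy⟩ := h
    exact (ih i hy).trans (Tm.depth_arg_lt (f := f) (fun j => (ts j).subst θ) i).le

theorem Tm.depth_subst_gt {θ : ℕ → Tm F} {y : ℕ} {f : F} {k : ℕ} {ts : Fin k → Tm F}
    (h : y ∈ (Tm.app f k ts).vars) :
    (θ y).depth < ((Tm.app f k ts).subst θ).depth := by
  obtain ⟨S, ⟨i, rfl⟩, hy⟩ := h
  exact lt_of_le_of_lt (Tm.depth_subst_ge hy)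
    (Tm.depth_arg_lt (f := f) (fun j => (ts j).subst θ) i)

/-- Iterated application of `f` to build arbitrarily deep ground terms. -/
def pad (f : F) (k : ℕ) (g : Tm F) : ℕ → Tm F
  | 0 => g
  | m+1 => .app f k (fun _ => pad f k g m)

theorem depth_pad {f : F} {k : ℕ} (hk : 1 ≤ k) (g : Tm F) (m : ℕ) :
    (pad f k g m).depth = m + g.depth := by
  induction m with
  | zero => simp [pad]
  | succ m ih =>
    have : Nonempty (Fin k) := ⟨⟨0, hk⟩⟩
    simp only [pad, Tm.depth, Finset.sup_const Finset.univ_nonempty, ih]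
    omega

theorem pad_injective {f : F} {k : ℕ} (hk : 1 ≤ k) (g : Tm F) :
    Function.Injective (pad f k g) := by
  intro m m' h
  have := congrArg Tm.depth h
  rw [depth_pad hk, depth_pad hk] at this
  omega

theorem pad_ground {f : F} {k : ℕ} {g : Tm F} (hg : g.isGround) (m : ℕ) :
    (pad f k g m).isGround := by
  induction m with
  | zero => exact hg
  | succ m ih => simp only [pad, Tm.isGround, Tm.vars, Set.iUnion_eq_empty]; exact fun _ => ih

theorem pad_WF {ar : F → ℕ} {f : F} {g : Tm F} (hg : g.WF ar) (m : ℕ) :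
    (pad f (ar f) g m).WF ar := by
  induction m with
  | zero => exact hg
  | succ m ih => exact ⟨rfl, fun _ => ih⟩

end Depth
section Unsub
variable {F Pr : Type}

open Classical in
/-- Partial inverse of a substitution `θ` on domain `D`. -/
noncomputable def unsub (D : Set ℕ) (θ : ℕ → Tm F) : Tm F → Tm F
  | .var n => .var n
  | .app f k ts =>
    if h : ∃ x, x ∈ D ∧ Tm.app f k ts = θ x then .var h.choose
    else .app f k (fun i => unsub D θ (ts i))

theorem unsub_cancel {D : Set ℕ} {θ : ℕ → Tm F} {P : Tm F → Prop}
    (hsub : ∀ f k ts, P (.app f k ts) → ∀ i, P (ts i))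
    (hvar : ∀ x, P (.var x) → x ∈ D ∧ ∀ x' ∈ D, θ x' = θ x → x' = x)
    (hvapp : ∀ x, P (.var x) → ∃ f k ts, θ x = Tm.app f k ts)
    (happ : ∀ f k (ts : Fin k → Tm F), P (.app f k ts) →
      ¬ ∃ x, x ∈ D ∧ (Tm.app f k ts).subst θ = θ x) :
    ∀ s, P s → unsub D θ (s.subst θ) = s := by
  intro s
  induction s with
  | var n =>
    intro hP
    obtain ⟨f, k, ts, hfk⟩ := hvapp n hP
    show unsub D θ (θ n) = _
    rw [hfk]
    rw [unsub]
    have hcond : ∃ x, x ∈ D ∧ Tm.app f k ts = θ x := ⟨n, (hvar n hP).1, hfk.symm⟩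
    rw [dif_pos hcond]
    have := hcond.choose_spec
    have hx := (hvar n hP).2 hcond.choose this.1 (by rw [← this.2, hfk])
    rw [hx]
  | app f k ts ih =>
    intro hP
    show unsub D θ (Tm.app f k (fun i => (ts i).subst θ)) = _
    rw [unsub]
    rw [dif_neg (by exact happ f k ts hP)]
    exact congrArg _ (funext fun i => ih i (hsub f k ts hP i))

end Unsub

section Herb
variable {F Pr : Type}

theorem leastHerbrandWF_isModel (ar : F → ℕ) (Pg : Program F Pr) :
    IsHerbrandModelWF ar Pg (leastHerbrandWF ar Pg) := by
  intro C hC σ hσ hb S hS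
  exact hS C hC σ hσ (fun B hB => hb B hB S hS)

/-- Function interpretation on the Herbrand universe. -/
noncomputable def herbFn (ar : F → ℕ) (g : Tm F) (hg : g.isGround ∧ g.WF ar)
    (f : F) (k : ℕ) (ds : Fin k → {t : Tm F // t.isGround ∧ t.WF ar}) :
    {t : Tm F // t.isGround ∧ t.WF ar} :=
  if h : k = ar f then
    ⟨Tm.app f k (fun i => (ds i).1),
      by simp only [Tm.isGround, Tm.vars, Set.iUnion_eq_empty]; exact fun i => (ds i).2.1,
      ⟨h, fun i => (ds i).2.2⟩⟩
  else ⟨g, hg⟩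

theorem herbFn_val (ar : F → ℕ) (g : Tm F) (hg : g.isGround ∧ g.WF ar)
    (f : F) (k : ℕ) (ds : Fin k → {t : Tm F // t.isGround ∧ t.WF ar}) (h : k = ar f) :
    (herbFn ar g hg f k ds).1 = Tm.app f k (fun i => (ds i).1) := by
  rw [herbFn, dif_pos h]

/-- The Herbrand interpretation over well-formed ground terms, with predicate
interpretation given by the least Herbrand model. -/
noncomputable def HerbInterp (ar : F → ℕ) (Pg : Program F Pr) (g : Tm F)
    (hg : g.isGround ∧ g.WF ar) : Interp F Pr where
  dom := {t : Tm F // t.isGround ∧ t.WF ar}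
  nonempty := ⟨⟨g, hg⟩⟩
  fn := herbFn ar g hg
  rel := fun p ds => (⟨p, ds.map Subtype.val⟩ : Atom F Pr) ∈ leastHerbrandWF ar Pg

theorem HerbInterp_eval (ar : F → ℕ) (Pg : Program F Pr) (g : Tm F)
    (hg : g.isGround ∧ g.WF ar) (ρ : ℕ → (HerbInterp (Pr := Pr) ar Pg g hg).dom)
    {t : Tm F} (ht : t.WF ar) :
    ((HerbInterp ar Pg g hg).eval ρ t).1 = t.subst (fun n => (ρ n).1) := by
  induction t with
  | var n => rfl
  | app f k ts ih =>
    obtain ⟨h1, h2⟩ := ht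
    show (herbFn ar g hg f k fun i => (HerbInterp ar Pg g hg).eval ρ (ts i)).1 = _
    refine (herbFn_val ar g hg f k _ h1).trans ?_
    exact congrArg _ (funext fun i => ih i (h2 i))

theorem HerbInterp_holdsAtom (ar : F → ℕ) (Pg : Program F Pr) (g : Tm F)
    (hg : g.isGround ∧ g.WF ar) (ρ : ℕ → (HerbInterp (Pr := Pr) ar Pg g hg).dom)
    {B : Atom F Pr} (hB : B.WFA ar) :
    (HerbInterp ar Pg g hg).holdsAtom ρ B ↔
      B.subst (fun n => (ρ n).1) ∈ leastHerbrandWF ar Pg := by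
  show (⟨B.pred, (B.args.map ((HerbInterp ar Pg g hg).eval ρ)).map Subtype.val⟩ : Atom F Pr)
      ∈ leastHerbrandWF ar Pg ↔ _
  erw [List.map_map]
  have : B.args.map (Subtype.val ∘ (HerbInterp ar Pg g hg).eval ρ) =
      B.args.map (Tm.subst (fun n => (ρ n).1)) := by
    apply List.map_congr_left
    intro t htmem
    exact HerbInterp_eval ar Pg g hg ρ (hB t htmem)
  rw [this]
  rfl

theorem HerbInterp_isModel (ar : F → ℕ) (Pg : Program F Pr) (g : Tm F)
    (hg : g.isGround ∧ g.WF ar) (hPwf : ProgramWF ar Pg) :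
    (HerbInterp (Pr := Pr) ar Pg g hg).isModel Pg := by
  intro C hC ρ hbody
  have hCwf := hPwf C hC
  rw [HerbInterp_holdsAtom ar Pg g hg ρ hCwf.1]
  refine leastHerbrandWF_isModel ar Pg C hC _ (fun n => (ρ n).2) ?_
  intro B hB
  rw [← HerbInterp_holdsAtom ar Pg g hg ρ (hCwf.2 B hB)]
  exact hbody B hB
end Herb
open Classical in
/-- Decoding of ground terms into a model `I`: designated alien instances are
mapped back to the values of the corresponding variables, everything else is
interpreted structurally. -/
noncomputable def dec {F Pr : Type} (I : Interp F Pr) (ρ0 : ℕ → I.dom) {k : ℕ}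
    (V : Fin k → ℕ) (tt : Fin k → Tm F) (θ : ℕ → Tm F) (D : Set ℕ) : Tm F → I.dom
  | .var n => ρ0 n
  | .app f m ts =>
    if h : ∃ i, Tm.app f m ts = (tt i).subst θ then ρ0 (V h.choose)
    else if h2 : ∃ x, x ∈ D ∧ Tm.app f m ts = θ x then ρ0 h2.choose
    else I.fn f m (fun j => dec I ρ0 V tt θ D (ts j))

theorem key_s9 {F Pr : Type} (ar : F → ℕ) (Pg : Program F Pr) (A A' : Atom F Pr)
    (hNA : ∀ u ∈ A'.args, ∀ s ∈ u.subterms, ¬ IsAlien (progSymbols Pg) s)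
    {k : ℕ} {V : Fin k → ℕ} {tt : Fin k → Tm F} {σ : ℕ → Tm F}
    (htinj : Function.Injective tt)
    (hAl : ∀ i, IsAlien (progSymbols Pg) (tt i))
    (hfs : FiniteSub σ V tt)
    (hVv : ∀ i, V i ∈ A'.vars)
    (hAA : A = A'.subst σ)
    {θ : ℕ → Tm F} (hθ : WFGroundSub ar θ)
    {r : Tm F → Tm F}
    (hr : ∀ s, (∃ u ∈ A.args, s ∈ u.subterms) → r (s.subst θ) = s)
    (hθalien : ∀ x ∈ A.vars, IsAlien (progSymbols Pg) (θ x))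
    (hM : HoldsInMWF ar Pg [A]) :
    Entails Pg [A'] := by
  intro I hI ρ0 B hB
  have hB' : B = A' := by simpa using hB
  subst B
  have hD : True := trivial
  -- the decoding function
  set d : Tm F → I.dom := dec I ρ0 V tt θ (A'.vars \ Set.range V) with hd
  -- basic facts
  have hDA : ∀ x ∈ A'.vars \ Set.range V, x ∈ A.vars := by
    rintro x ⟨hx1, hx2⟩
    have hσx : σ x = .var x := hfs.2 x (fun i hi => hx2 ⟨i, hi⟩)
    obtain ⟨u, hu, hxu⟩ := hx1
    refine hAA ▸ ⟨u.subst σ, List.mem_map_of_mem hu, ?_⟩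
    exact Tm.vars_subst_mem σ hxu (by rw [hσx]; exact rfl)
  have hSAvar : ∀ x ∈ A.vars, ∃ u ∈ A.args, Tm.var x ∈ u.subterms := by
    rintro x ⟨u, hu, hxu⟩
    exact ⟨u, hu, Tm.var_mem_subterms.1 hxu⟩
  have hSAt : ∀ i, ∃ u ∈ A.args, tt i ∈ u.subterms := by
    intro i
    obtain ⟨u, hu, hxu⟩ := hVv i
    refine ⟨u.subst σ, hAA ▸ List.mem_map_of_mem hu, ?_⟩
    have := Tm.subst_mem_subterms σ hxu
    rwa [hfs.1 i] at this
  have htapp : ∀ i, ∃ f m ts, tt i = Tm.app f m ts ∧ f ∉ progSymbols Pg := by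
    intro i
    obtain ⟨f, hhead, hf⟩ := hAl i
    cases h : tt i with
    | var n => rw [h] at hhead; cases hhead
    | app f' m ts =>
      rw [h] at hhead
      cases hhead
      exact ⟨f, m, ts, rfl, hf⟩
  have hθapp : ∀ x ∈ A.vars, ∃ f m ts, θ x = Tm.app f m ts ∧ f ∉ progSymbols Pg := by
    intro x hx
    obtain ⟨f, hhead, hf⟩ := hθalien x hx
    cases h : θ x with
    | var n => rw [h] at hhead; cases hhead
    | app f' m ts =>
      rw [h] at hhead
      cases hhead
      exact ⟨f, m, ts, rfl, hf⟩
  have httinj : ∀ i j, (tt i).subst θ = (tt j).subst θ → i = j := by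
    intro i j hij
    apply htinj
    rw [← hr (tt i) (hSAt i), ← hr (tt j) (hSAt j), hij]
  -- F1 : decoding designated aliens
  have hdec1 : ∀ i, d ((tt i).subst θ) = ρ0 (V i) := by
    intro i
    obtain ⟨f, m, ts, htieq, hf⟩ := htapp i
    have hcond : ∃ i', Tm.app f m (fun j => (ts j).subst θ) = (tt i').subst θ :=
      ⟨i, by rw [htieq]; rfl⟩
    rw [htieq]
    show d (Tm.app f m (fun j => (ts j).subst θ)) = _
    rw [hd, dec, dif_pos hcond]
    have hcs := hcond.choose_spec
    have : (tt hcond.choose).subst θ = (tt i).subst θ := by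
      rw [← hcs, htieq]; rfl
    rw [httinj _ _ this]
  -- F2 : decoding fresh variable images
  have hdec2 : ∀ x ∈ A'.vars \ Set.range V, d (θ x) = ρ0 x := by
    intro x hx
    have hxA := hDA x hx
    obtain ⟨f, m, ts, hθeq, hf⟩ := hθapp x hxA
    have hrx : r (θ x) = Tm.var x := hr (Tm.var x) (hSAvar x hxA)
    have hcond1 : ¬ ∃ i, Tm.app f m ts = (tt i).subst θ := by
      rintro ⟨i, hi⟩
      have : Tm.var x = tt i := by
        rw [← hrx, hθeq, hi, hr (tt i) (hSAt i)]
      obtain ⟨f', m', ts', htieq, -⟩ := htapp i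
      rw [htieq] at this
      cases this
    have hcond2 : ∃ x', x' ∈ A'.vars \ Set.range V ∧ Tm.app f m ts = θ x' :=
      ⟨x, hx, hθeq.symm⟩
    rw [hθeq]
    rw [hd, dec, dif_neg hcond1, dif_pos hcond2]
    have hcs := hcond2.choose_spec
    have : (Tm.var hcond2.choose : Tm F) = Tm.var x := by
      have h1 : r (θ hcond2.choose) = Tm.var hcond2.choose :=
        hr (Tm.var hcond2.choose) (hSAvar _ (hDA _ hcs.1))
      rw [← h1, ← hcs.2, ← hθeq, hrx]
    cases this
    rfl
  -- F3 : structural decoding for program symbols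
  have hdec3 : ∀ f m ts, f ∈ progSymbols Pg →
      d (Tm.app f m ts) = I.fn f m (fun j => d (ts j)) := by
    intro f m ts hf
    have hcond1 : ¬ ∃ i, Tm.app f m ts = (tt i).subst θ := by
      rintro ⟨i, hi⟩
      obtain ⟨f', m', ts', htieq, hf'⟩ := htapp i
      rw [htieq] at hi
      injection hi with h1 _
      exact hf' (h1 ▸ hf)
    have hcond2 : ¬ ∃ x, x ∈ A'.vars \ Set.range V ∧ Tm.app f m ts = θ x := by
      rintro ⟨x, hxD, hx⟩
      obtain ⟨f', m', ts', hθeq, hf'⟩ := hθapp x (hDA x hxD)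
      rw [hθeq] at hx
      injection hx with h1 _
      exact hf' (h1 ▸ hf)
    rw [hd, dec, dif_neg hcond1, dif_neg hcond2]
  -- F4 : decoding commutes with evaluation on alien-free terms
  have hdec4 : ∀ u : Tm F, (∀ s ∈ u.subterms, ¬ IsAlien (progSymbols Pg) s) →
      ∀ γ : ℕ → Tm F, d (u.subst γ) = I.eval (fun n => d (γ n)) u := by
    intro u
    induction u with
    | var n => intro _ γ; rfl
    | app f m ts ih =>
      intro hna γ
      have hf : f ∈ progSymbols Pg := by
        by_contra hf
        exact hna _ (Tm.self_mem_subterms _) ⟨f, rfl, hf⟩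
      show d (Tm.app f m fun j => (ts j).subst γ) = _
      rw [hdec3 f m _ hf]
      exact congrArg _ (funext fun j => ih j
        (fun s hs => hna s (Tm.subterms_trans (Tm.arg_mem_subterms ts j) hs)) γ)
  -- F5 : the decoded interpretation is a Herbrand model
  have hatom : ∀ (B : Atom F Pr), (∀ fb ∈ B.symbols, fb ∈ progSymbols Pg) →
      ∀ γ : ℕ → Tm F,
      (I.rel (B.subst γ).pred ((B.subst γ).args.map d) ↔
        I.holdsAtom (fun n => d (γ n)) B) := by
    intro B hBsym γ
    show I.rel B.pred ((B.args.map (Tm.subst γ)).map d) ↔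
      I.rel B.pred (B.args.map (I.eval fun n => d (γ n)))
    rw [List.map_map]
    have : B.args.map (d ∘ Tm.subst γ) = B.args.map (I.eval fun n => d (γ n)) := by
      apply List.map_congr_left
      intro u hu
      exact hdec4 u (Tm.noAlien_of_symbols (fun fb hfb => hBsym fb ⟨u, hu, hfb⟩)) γ
    rw [this]
  have hS : IsHerbrandModelWF ar Pg {B : Atom F Pr | I.rel B.pred (B.args.map d)} := by
    intro C hC γ hγ hbody
    show I.rel (C.head.subst γ).pred ((C.head.subst γ).args.map d)
    rw [hatom C.head (fun fb hfb => ⟨C, hC, Or.inl hfb⟩) γ]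
    apply hI C hC
    intro B hB
    rw [← hatom B (fun fb hfb => ⟨C, hC, Or.inr ⟨B, hB, hfb⟩⟩) γ]
    exact hbody B hB
  -- final assembly
  have hAM : A.subst θ ∈ leastHerbrandWF ar Pg := hM θ hθ A (by simp)
  have hAS : I.rel (A.subst θ).pred ((A.subst θ).args.map d) :=
    hAM {B : Atom F Pr | I.rel B.pred (B.args.map d)} hS
  have hAθ : A.subst θ = A'.subst (fun n => (σ n).subst θ) := by
    rw [hAA, Atom.subst_subst]
  rw [hAθ] at hAS
  show I.rel A'.pred (A'.args.map (I.eval ρ0))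
  have hmain : I.rel A'.pred ((A'.args.map (Tm.subst fun n => (σ n).subst θ)).map d) := hAS
  rw [List.map_map] at hmain
  have : A'.args.map (d ∘ Tm.subst fun n => (σ n).subst θ) = A'.args.map (I.eval ρ0) := by
    apply List.map_congr_left
    intro u hu
    show d (u.subst fun n => (σ n).subst θ) = _
    rw [hdec4 u (hNA u hu) _]
    apply I.eval_congr
    intro x hxu
    show d ((σ x).subst θ) = ρ0 x
    by_cases hxV : ∃ i, V i = x
    · obtain ⟨i, rfl⟩ := hxV
      rw [hfs.1 i]
      exact hdec1 i
    · have hσx : σ x = .var x := hfs.2 x (fun i hi => hxV ⟨i, hi⟩)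
      rw [hσx]
      exact hdec2 x ⟨⟨u, hu, hxu⟩, fun hrange => hxV hrange⟩
  rw [this] at hmain
  exact hmain
theorem le_foldrMax {l : List ℕ} {a : ℕ} (h : a ∈ l) : a ≤ l.foldr max 0 := by
  induction l with
  | nil => cases h
  | cons b l ih =>
    rcases List.mem_cons.1 h with rfl | h
    · exact le_max_left _ _
    · exact le_trans (ih h) (le_max_right _ _)

/-- A constant as a term. -/
def const0 {F : Type} (f : F) : Tm F := Tm.app f 0 (fun i => i.elim0)

theorem const0_ground {F : Type} (f : F) : (const0 f).isGround := by
  simp [const0, Tm.isGround, Tm.vars]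

theorem const0_WF {F : Type} {ar : F → ℕ} {f : F} (h : ar f = 0) : (const0 f).WF ar :=
  ⟨h.symm, fun i => i.elim0⟩

/-- for an atom `Q` with generalization `Q'` for `P`: if (a) some
non-constant function symbol does not occur in `P`, or (b) `Q` has exactly `n`
distinct variables and there are `n` constants occurring neither in `P` nor in `Q`,
then `M_P ⊨ Q` iff `P ⊨ Q'`. -/
theorem stmt_9 {F Pr : Type} (ar : F → ℕ) (Pg : Program F Pr) (A A' : Atom F Pr)
    (hPwf : ProgramWF ar Pg) (hAwf : A.WFA ar)
    (hHU : ∃ g : Tm F, g.isGround ∧ g.WF ar)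
    (hgen : IsGenQuery (progSymbols Pg) [A'] [A])
    (hcond :
      (∃ f : F, 1 ≤ ar f ∧ f ∉ progSymbols Pg) ∨
      (∃ (n : ℕ) (W : Fin n → ℕ), Function.Injective W ∧ A.vars = Set.range W ∧
        ∃ c : Fin n → F, Function.Injective c ∧
          ∀ i, ar (c i) = 0 ∧ c i ∉ progSymbols Pg ∧ c i ∉ A.symbols)) :
    HoldsInMWF ar Pg [A] ↔ Entails Pg [A'] := by
  classical
  obtain ⟨g, hg1, hg2⟩ := hHU
  obtain ⟨hNAq, k, V, tt, σ, hVinj, htinj, hAl, hfs, hVv, hsub⟩ := hgen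
  have hAA : A = A'.subst σ := by
    simpa [substQuery] using hsub
  have hNA : ∀ u ∈ A'.args, ∀ s ∈ u.subterms, ¬ IsAlien (progSymbols Pg) s :=
    fun u hu => hNAq A' (by simp) u hu
  have hVv' : ∀ i, V i ∈ A'.vars := by
    intro i
    have := hVv i
    simpa [queryVars] using this
  have hA'wf : A'.WFA ar := by
    intro u hu
    have hmem : u.subst σ ∈ A.args := by
      rw [hAA]; exact List.mem_map_of_mem hu
    exact Tm.WF_of_subst (hAwf _ hmem)
  have hSA_head : ∀ (f : F) (m : ℕ) (ts : Fin m → Tm F),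
      (∃ u ∈ A.args, Tm.app f m ts ∈ u.subterms) → f ∈ A.symbols := by
    rintro f m ts ⟨u, hu, hs⟩
    exact ⟨u, hu, Tm.symbols_subterm hs (Or.inl rfl)⟩
  have hSA_sub : ∀ (f : F) (m : ℕ) (ts : Fin m → Tm F),
      (∃ u ∈ A.args, Tm.app f m ts ∈ u.subterms) →
      ∀ i, ∃ u ∈ A.args, ts i ∈ u.subterms := by
    rintro f m ts ⟨u, hu, hs⟩ i
    exact ⟨u, hu, Tm.subterms_trans hs (Tm.arg_mem_subterms ts i)⟩
  have hSA_var : ∀ x : ℕ, (∃ u ∈ A.args, Tm.var x ∈ u.subterms) → x ∈ A.vars := by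
    rintro x ⟨u, hu, hs⟩
    exact ⟨u, hu, Tm.var_mem_subterms.2 hs⟩
  constructor
  · -- hard direction: M_P ⊨ A → P ⊨ A'
    intro hM
    rcases hcond with ⟨f1, hf1, hf1p⟩ | ⟨n, W, hWinj, hWvars, c, hcinj, hc⟩
    · -- case (a): a fresh non-constant function symbol
      set K := (A.args.map Tm.depth).foldr max 0 + 1 with hK
      have hKpos : 0 < K := Nat.succ_pos _
      have hdepthlt : ∀ s : Tm F, (∃ u ∈ A.args, s ∈ u.subterms) → s.depth < K := by
        rintro s ⟨u, hu, hs⟩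
        have h1 : s.depth ≤ u.depth := Tm.depth_subterm_le hs
        have h2 : u.depth ≤ (A.args.map Tm.depth).foldr max 0 :=
          le_foldrMax (List.mem_map_of_mem hu)
        omega
      set θ : ℕ → Tm F := fun x => pad f1 (ar f1) g ((x+1)*K) with hθdef
      have hsucc : ∀ x : ℕ, (x+1)*K = ((x+1)*K - 1) + 1 := by
        intro x
        have : 1 ≤ (x+1)*K := Nat.one_le_iff_ne_zero.2 (by positivity)
        omega
      have hθapp : ∀ x : ℕ, θ x = Tm.app f1 (ar f1)
          (fun _ => pad f1 (ar f1) g ((x+1)*K - 1)) := by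
        intro x
        show pad f1 (ar f1) g ((x+1)*K) = _
        rw [hsucc x]
        rfl
      have hθ : WFGroundSub ar θ := fun x => ⟨pad_ground hg1 _, pad_WF hg2 _⟩
      have hθalien : ∀ x ∈ A.vars, IsAlien (progSymbols Pg) (θ x) := by
        intro x _
        rw [hθapp x]
        exact ⟨f1, rfl, hf1p⟩
      have hr : ∀ s : Tm F, (∃ u ∈ A.args, s ∈ u.subterms) →
          unsub Set.univ θ (s.subst θ) = s := by
        apply unsub_cancel
        · exact fun f m ts hP i => hSA_sub f m ts hP i
        · intro x _
          refine ⟨trivial, fun x' _ hx' => ?_⟩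
          have := pad_injective hf1 g hx'
          have := Nat.eq_of_mul_eq_mul_right hKpos this
          omega
        · intro x _
          exact ⟨f1, ar f1, _, hθapp x⟩
        · rintro f m ts hP ⟨x, -, heq⟩
          have hslt : (Tm.app f m ts).depth < K := hdepthlt _ hP
          have hdeq : ((Tm.app f m ts).subst θ).depth = (x+1)*K + g.depth := by
            rw [heq]
            exact depth_pad hf1 g _
          have hylt : ∀ y ∈ (Tm.app f m ts).vars, y < x := by
            intro y hy
            have h1 : (θ y).depth < ((Tm.app f m ts).subst θ).depth := Tm.depth_subst_gt hy
            have h2 : (θ y).depth = (y+1)*K + g.depth := depth_pad hf1 g _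
            rw [hdeq, h2] at h1
            have h3 : K*(y+1) < K*(x+1) := by
              rw [Nat.mul_comm K, Nat.mul_comm K]; omega
            have := Nat.lt_of_mul_lt_mul_left h3
            omega
          have hub : ((Tm.app f m ts).subst θ).depth ≤
              (Tm.app f m ts).depth + (x*K + g.depth) := by
            apply Tm.depth_subst_le
            intro y hy
            have h2 : (θ y).depth = (y+1)*K + g.depth := depth_pad hf1 g _
            have h3 : y + 1 ≤ x := hylt y hy
            have h4 : (y+1)*K ≤ x*K := Nat.mul_le_mul_right K h3
            omega
          rw [hdeq] at hub
          have : (x+1)*K = x*K + K := by ring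
          omega
      exact key_s9 ar Pg A A' hNA htinj hAl hfs hVv' hAA hθ hr hθalien hM
    · -- case (b): n fresh constants for the n variables of A
      set θ : ℕ → Tm F := fun x => if h : ∃ j, W j = x then const0 (c h.choose) else g
        with hθdef
      have hθW : ∀ j, θ (W j) = const0 (c j) := by
        intro j
        have hcond : ∃ j', W j' = W j := ⟨j, rfl⟩
        show dite _ _ _ = _
        rw [dif_pos hcond]
        rw [hWinj hcond.choose_spec]
      have hθ : WFGroundSub ar θ := by
        intro x
        simp only [hθdef]
        by_cases h : ∃ j, W j = x
        · rw [dif_pos h]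
          exact ⟨const0_ground _, const0_WF (hc _).1⟩
        · rw [dif_neg h]
          exact ⟨hg1, hg2⟩
      have hθalien : ∀ x ∈ A.vars, IsAlien (progSymbols Pg) (θ x) := by
        intro x hx
        rw [hWvars] at hx
        obtain ⟨j, rfl⟩ := hx
        rw [hθW j]
        exact ⟨c j, rfl, (hc j).2.1⟩
      have hr : ∀ s : Tm F, (∃ u ∈ A.args, s ∈ u.subterms) →
          unsub (Set.range W) θ (s.subst θ) = s := by
        apply unsub_cancel
        · exact fun f m ts hP i => hSA_sub f m ts hP i
        · intro x hP
          have hx : x ∈ Set.range W := hWvars ▸ hSA_var x hP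
          refine ⟨hx, fun x' hx' hxx' => ?_⟩
          obtain ⟨j, rfl⟩ := hx
          obtain ⟨j', rfl⟩ := hx'
          rw [hθW j, hθW j'] at hxx'
          have : c j' = c j := by
            injection hxx'
          rw [hcinj this]
        · intro x hP
          have hx : x ∈ Set.range W := hWvars ▸ hSA_var x hP
          obtain ⟨j, rfl⟩ := hx
          exact ⟨c j, 0, _, hθW j⟩
        · rintro f m ts hP ⟨x, hx, heq⟩
          obtain ⟨j, rfl⟩ := hx
          rw [hθW j] at heq
          have : f = c j := by
            injection heq
          exact (hc j).2.2 (this ▸ hSA_head f m ts hP)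
      exact key_s9 ar Pg A A' hNA htinj hAl hfs hVv' hAA hθ hr hθalien hM
  · -- easy direction: P ⊨ A' → M_P ⊨ A
    intro hE τ hτ B hB
    have hB' : B = A := by simpa using hB
    subst B
    let I := HerbInterp (Pr := Pr) ar Pg g ⟨hg1, hg2⟩
    have hσwf : ∀ x, (σ x).WF ar := by
      intro x
      by_cases hx : ∃ i, V i = x
      · obtain ⟨i, rfl⟩ := hx
        rw [hfs.1 i]
        obtain ⟨u, hu, hxu⟩ := hVv' i
        have hmem : u.subst σ ∈ A.args := by
          rw [hAA]; exact List.mem_map_of_mem hu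
        have hsub' : tt i ∈ (u.subst σ).subterms := by
          have := Tm.subst_mem_subterms σ hxu
          rwa [hfs.1 i] at this
        exact Tm.WF_subterm (hAwf _ hmem) hsub'
      · rw [hfs.2 x (fun i hi => hx ⟨i, hi⟩)]
        trivial
    set ρ : ℕ → I.dom := fun n =>
      ⟨(σ n).subst τ, Tm.ground_subst (fun m => (hτ m).1) _,
        Tm.WF_subst (fun m => (hτ m).2) (hσwf n)⟩ with hρ
    have hhold := hE I (HerbInterp_isModel ar Pg g ⟨hg1, hg2⟩ hPwf) ρ A' (by simp)
    rw [HerbInterp_holdsAtom ar Pg g ⟨hg1, hg2⟩ ρ hA'wf] at hhold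
    have he : A'.subst (fun n => (ρ n).1) = A.subst τ := by
      rw [hAA, Atom.subst_subst]
    rwa [he] at hhold
end
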